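/- arXiv:0906.5055 — 3 statements merged into one kernel-verified Lean document; each statement's English description precedes it below -/
import Mathlib

section
/- Let X and Y be complex Banach spaces, A ∈ B(X), B ∈ B(Y), C ∈ B(Y, X), and let M_C ∈ B(X ⊕ Y) be the upper-triangular operator matrix M_C(x, y) = (Ax + Cy, By). If B is invertible in B(Y), then M_C has finite descent if and only if A has finite descent. -/
noncomputable section

open ContinuousLinearMap Metric Set

variable {E : Type*} [NormedAddCommGroup E] [NormedSpace ℂ E]
variable {X Y : Type*} [NormedAddCommGroup X] [NormedSpace ℂ X] [CompleteSpace X]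
  [NormedAddCommGroup Y] [NormedSpace ℂ Y] [CompleteSpace Y]

/-- `T` has finite descent: some power has the same range as the next one. -/
def HasFiniteDescent (T : E →L[ℂ] E) : Prop :=
  ∃ k : ℕ, LinearMap.range ((T ^ k : E →L[ℂ] E) : E →ₗ[ℂ] E) = LinearMap.range ((T ^ (k + 1) : E →L[ℂ] E) : E →ₗ[ℂ] E)

/-- The upper-triangular operator matrix `M_C (x, y) = (A x + C y, B y)` on `X ⊕ Y`. -/
def ucMat (A : X →L[ℂ] X) (B : Y →L[ℂ] Y) (C : Y →L[ℂ] X) :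
    (X × Y) →L[ℂ] (X × Y) :=
  (A.comp (ContinuousLinearMap.fst ℂ X Y) + C.comp (ContinuousLinearMap.snd ℂ X Y)).prod
    (B.comp (ContinuousLinearMap.snd ℂ X Y))

/-!
Write `M = ucMat A B C`; then `M (x, 0) = (A x, 0)` and `(M p).2 = B p.2`, and the same holds
for the powers. Injectivity of `B` gives `(w, 0) ∈ ran Mⁿ ↔ w ∈ ran Aⁿ`, so finite descent passes
from `M` to `A`. Surjectivity of `B` writes every `p` as `M (0, y) + (x, 0)`, whence
`ran Mⁿ = ran Mⁿ⁺¹ ⊔ (ran Aⁿ × 0)`; once `ran Aⁿ = ran Aⁿ⁺¹` the second summand already lies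
in `ran Mⁿ⁺¹`.
-/

local notation "ran " T:max => LinearMap.range (ContinuousLinearMap.toLinearMap T)

namespace ucMat

variable {V W : Type*} [NormedAddCommGroup V] [NormedSpace ℂ V] [NormedAddCommGroup W]
  [NormedSpace ℂ W] (A : V →L[ℂ] V) (B : W →L[ℂ] W) (C : W →L[ℂ] V)

lemma pow_apply_inl (n : ℕ) (x : V) : (ucMat A B C ^ n) (x, 0) = ((A ^ n) x, 0) := by
  have : Function.Semiconj (fun x : V => (x, (0 : W))) A (ucMat A B C) := fun x => by
    simp [ucMat]
  simpa only [FunLike.coe_pow_eq_iterate] using (this.iterate_right n x).symm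

lemma snd_pow_apply (n : ℕ) (p : V × W) : ((ucMat A B C ^ n) p).2 = (B ^ n) p.2 := by
  have : Function.Semiconj Prod.snd (ucMat A B C) B := fun _ => rfl
  simpa only [FunLike.coe_pow_eq_iterate] using this.iterate_right n p

lemma prod_range_pow_bot_le (n : ℕ) : (ran (A ^ n)).prod ⊥ ≤ ran (ucMat A B C ^ n) := by
  rintro ⟨_, z⟩ ⟨⟨x, rfl⟩, hz : z = 0⟩
  exact ⟨(x, 0), by rw [coe_coe, pow_apply_inl, coe_coe, hz]⟩

lemma mk_zero_mem_range_pow_iff (hB : Function.Injective B) (n : ℕ) (w : V) :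
    (w, 0) ∈ ran (ucMat A B C ^ n) ↔ w ∈ ran (A ^ n) := by
  refine ⟨?_, fun hw => prod_range_pow_bot_le A B C n ⟨hw, rfl⟩⟩
  rintro ⟨p, hp⟩
  rw [coe_coe] at hp
  have hp2 : p.2 = 0 := by
    have := congr_arg Prod.snd hp
    rw [snd_pow_apply, ← map_zero (B ^ n), FunLike.coe_pow_eq_iterate] at this
    exact hB.iterate n this
  rw [← Prod.mk.eta (p := p), hp2, pow_apply_inl, Prod.mk.injEq] at hp
  exact ⟨p.1, by rw [coe_coe, hp.1]⟩

lemma range_pow_eq_sup (hB : Function.Surjective B) (n : ℕ) :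
    ran (ucMat A B C ^ n) = ran (ucMat A B C ^ (n + 1)) ⊔ (ran (A ^ n)).prod ⊥ := by
  refine le_antisymm ?_ (sup_le ?_ (prod_range_pow_bot_le A B C n))
  · rintro _ ⟨p, rfl⟩
    obtain ⟨y, hy⟩ := hB p.2
    have hp : p = ucMat A B C (0, y) + (p.1 - C y, 0) := by ext <;> simp [ucMat, hy]
    have : (ucMat A B C ^ n) p = (ucMat A B C ^ (n + 1)) (0, y) + ((A ^ n) (p.1 - C y), 0) := by
      conv_lhs => rw [hp, map_add, pow_apply_inl, ← mul_apply_eq_comp, ← pow_succ]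
    rw [coe_coe, this]
    exact Submodule.add_mem_sup ⟨(0, y), rfl⟩ ⟨⟨p.1 - C y, rfl⟩, rfl⟩
  · rintro _ ⟨p, rfl⟩
    exact ⟨ucMat A B C p, by simp [pow_succ]⟩

end ucMat

theorem stmt0 (A : X →L[ℂ] X) (B : Y →L[ℂ] Y) (C : Y →L[ℂ] X) (hB : IsUnit B) :
    HasFiniteDescent (ucMat A B C) ↔ HasFiniteDescent A := by
  obtain ⟨hB_inj, hB_surj⟩ := ContinuousLinearMap.isUnit_iff_bijective.mp hB
  constructor
  · rintro ⟨k, hk⟩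
    refine ⟨k, Submodule.ext fun w => ?_⟩
    rw [← ucMat.mk_zero_mem_range_pow_iff A B C hB_inj, hk,
      ucMat.mk_zero_mem_range_pow_iff A B C hB_inj]
  · rintro ⟨k, hk⟩
    refine ⟨k, ?_⟩
    rw [ucMat.range_pow_eq_sup A B C hB_surj, hk,
      sup_eq_left.mpr (ucMat.prod_range_pow_bot_le A B C (k + 1))]
end
end

section
/- Let X and Y be complex Banach spaces, A ∈ B(X), C ∈ B(Y, X), and let M_C ∈ B(X ⊕ Y) be the upper-triangular operator matrix with B = 0, i.e. M_C(x, y) = (Ax + Cy, 0). Then M_C has finite descent if and only if A has finite descent. -/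
noncomputable section

open ContinuousLinearMap Metric Set

variable {E : Type*} [NormedAddCommGroup E] [NormedSpace ℂ E]
variable {X Y : Type*} [NormedAddCommGroup X] [NormedSpace ℂ X] [CompleteSpace X]
  [NormedAddCommGroup Y] [NormedSpace ℂ Y] [CompleteSpace Y]

/-! With `g = map A` acting on submodules of `X`, the range of `A ^ n` is `g^[n] ⊤`, and `M_C` maps
`S × 0` to `g S × 0`; as `ran M_C = R × 0` with `R = ran A + ran C`, the range of `M_C ^ (n + 1)` is
`g^[n] R × 0`. Because `ran A ≤ R ≤ X`, the two chains interleave,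
`ran (A ^ (n + 1)) ≤ g^[n] R ≤ ran (A ^ n)`, so one becomes stationary iff the other does. -/

open Function

theorem Monotone.exists_isFixedPt_iterate_iff {α : Type*} [PartialOrder α] {g : α → α}
    (hg : Monotone g) {x y : α} (hgx : g x ≤ y) (hyx : y ≤ x) :
    (∃ k, IsFixedPt g (g^[k] y)) ↔ ∃ k, IsFixedPt g (g^[k] x) := by
  have upper (n : ℕ) : g^[n] y ≤ g^[n] x := hg.iterate n hyx
  have lower (n : ℕ) : g^[n + 1] x ≤ g^[n] y := by
    rw [iterate_succ_apply]; exact hg.iterate n hgx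
  have stable {z : α} {k : ℕ} (hz : IsFixedPt g (g^[k] z)) : g^[2 + k] z = g^[k] z := by
    rw [iterate_add_apply]; exact hz.iterate 2
  constructor
  · rintro ⟨k, hk⟩
    refine ⟨k + 1, ?_⟩
    change g (g^[k + 1] x) = _
    rw [← iterate_succ_apply' g]
    refine le_antisymm ((lower (k + 1)).trans (upper (k + 1))) ?_
    calc g^[k + 1] x ≤ g^[k] y := lower k
      _ = g^[k + 2] y := by rw [← stable hk, add_comm]
      _ ≤ g^[k + 2] x := upper (k + 2)
  · rintro ⟨k, hk⟩
    refine ⟨k, ?_⟩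
    change g (g^[k] y) = _
    rw [← iterate_succ_apply' g]
    refine le_antisymm ((upper (k + 1)).trans (lower k)) ?_
    calc g^[k] y ≤ g^[k] x := upper k
      _ = g^[k + 2] x := by rw [← stable hk, add_comm]
      _ ≤ g^[k + 1] y := lower (k + 1)

theorem Function.Semiconj.isFixedPt_map_iff {α β : Type*} {f : α → β} {ga : α → α}
    {gb : β → β} (h : Semiconj f ga gb) (hf : Injective f) {x : α} :
    IsFixedPt gb (f x) ↔ IsFixedPt ga x := by
  rw [IsFixedPt, ← h.eq, hf.eq_iff, IsFixedPt]

theorem LinearMap.range_pow_eq_iterate_map {R M : Type*} [Semiring R] [AddCommMonoid M]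
    [Module R M] (f : Module.End R M) (n : ℕ) :
    LinearMap.range (f ^ n) = (Submodule.map f)^[n] ⊤ := by
  induction n with
  | zero => simp [Module.End.one_eq_id]
  | succ n ih =>
    rw [iterate_succ_apply', ← ih, pow_succ', Module.End.mul_eq_comp, LinearMap.range_comp]

theorem Submodule.prod_bot_injective {R M N : Type*} [Semiring R] [AddCommMonoid M]
    [AddCommMonoid N] [Module R M] [Module R N] :
    Injective fun p : Submodule R M => p.prod (⊥ : Submodule R N) := by
  intro p q h
  ext x
  simpa using SetLike.ext_iff.mp h (x, 0)

theorem hasFiniteDescent_iff_exists_isFixedPt (T : E →L[ℂ] E) :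
    HasFiniteDescent T ↔
      ∃ k, IsFixedPt (Submodule.map (T : E →ₗ[ℂ] E)) ((Submodule.map (T : E →ₗ[ℂ] E))^[k] ⊤) := by
  simp only [HasFiniteDescent, toLinearMap_pow, LinearMap.range_pow_eq_iterate_map,
    iterate_succ_apply', IsFixedPt, eq_comm]

section UpperTriangular

variable {V W : Type*} [NormedAddCommGroup V] [NormedSpace ℂ V] [NormedAddCommGroup W]
  [NormedSpace ℂ W]

theorem map_ucMat_zero_prod_bot (A : V →L[ℂ] V) (C : W →L[ℂ] V) (p : Submodule ℂ V) :
    (p.prod ⊥).map (ucMat A 0 C : V × W →ₗ[ℂ] V × W) = (p.map (A : V →ₗ[ℂ] V)).prod ⊥ := by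
  ext ⟨x, y⟩
  simp [ucMat, eq_comm, ← and_assoc, exists_and_right]

theorem range_ucMat_zero (A : V →L[ℂ] V) (C : W →L[ℂ] V) :
    LinearMap.range (ucMat A 0 C : V × W →ₗ[ℂ] V × W) =
      (LinearMap.range (A : V →ₗ[ℂ] V) ⊔ LinearMap.range (C : W →ₗ[ℂ] V)).prod ⊥ := by
  ext ⟨x, y⟩
  simp [ucMat, Submodule.mem_sup, eq_comm]

end UpperTriangular

theorem stmt1 (A : X →L[ℂ] X) (C : Y →L[ℂ] X) :
    HasFiniteDescent (ucMat A (0 : Y →L[ℂ] Y) C) ↔ HasFiniteDescent A := by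
  rw [hasFiniteDescent_iff_exists_isFixedPt, hasFiniteDescent_iff_exists_isFixedPt]
  set g := Submodule.map (A : X →ₗ[ℂ] X)
  set G := Submodule.map (ucMat A 0 C : X × Y →ₗ[ℂ] X × Y)
  set R := LinearMap.range (A : X →ₗ[ℂ] X) ⊔ LinearMap.range (C : Y →ₗ[ℂ] X)
  have hGtop : G ⊤ = R.prod ⊥ := (LinearMap.range_eq_map _).symm.trans (range_ucMat_zero A C)
  have hgtop : g ⊤ ≤ R := (LinearMap.range_eq_map (A : X →ₗ[ℂ] X)).ge.trans le_sup_left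
  have hsemiconj : Semiconj (fun p : Submodule ℂ X => p.prod (⊥ : Submodule ℂ Y)) g G :=
    fun p => (map_ucMat_zero_prod_bot A C p).symm
  have hg : Monotone g := fun _ _ => Submodule.map_mono
  have hG : Monotone G := fun _ _ => Submodule.map_mono
  rw [← hG.exists_isFixedPt_iterate_iff le_rfl le_top, hGtop,
    ← hg.exists_isFixedPt_iterate_iff hgtop le_top]
  refine exists_congr fun k => ?_
  rw [← (hsemiconj.iterate_right k).eq, hsemiconj.isFixedPt_map_iff Submodule.prod_bot_injective]
end
end

section
/- Let X and Y be complex Banach spaces, A ∈ B(X), B ∈ B(Y), C ∈ B(Y, X), and let M_C ∈ B(X ⊕ Y) be the upper-triangular operator matrix M_C(x, y) = (Ax + Cy, By). Then σ_des(M_C) ∪ S(B) = σ_des(A) ∪ σ_des(B) ∪ S(B), where σ_des denotes the descent spectrum and S(B) the set of points where B fails to have the single valued extension property. -/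
/-!
Fix `z`. If `B` fails the SVEP at `z`, both sides contain `z`. Otherwise we show that `M_C - z`
has finite descent iff `A - z` and `B - z` do. Projecting onto `Y` bounds the descent of `B` by
that of `M_C`, and a direct computation bounds the descent of `M_C` by the sum of those of `A` and
`B`. For `A`, the open mapping theorem turns finite descent of `M_C - z` into geometrically
bounded backward orbits through any `(x', 0)` in `ran (M_C - z)^d`; their `Y`-components form a
backward orbit of `B - z` through `0`, whose generating power series is a local analytic solution
of `(B - μ) f(μ) = 0`, so they vanish by the SVEP, and the `X`-components then exhibit
`(A - z)^d x ∈ ran (A - z)^(d+1)`.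
-/

noncomputable section

open ContinuousLinearMap Metric Set

variable {E : Type*} [NormedAddCommGroup E] [NormedSpace ℂ E]
variable {X Y : Type*} [NormedAddCommGroup X] [NormedSpace ℂ X] [CompleteSpace X]
  [NormedAddCommGroup Y] [NormedSpace ℂ Y] [CompleteSpace Y]

/-- The descent spectrum. -/
def descentSpectrum (T : E →L[ℂ] E) : Set ℂ :=
  {z | ¬ HasFiniteDescent (T - z • 1)}

/-- `T` has the single valued extension property at `z₀`. -/
def HasSVEPAt (T : E →L[ℂ] E) (z₀ : ℂ) : Prop :=
  ∃ r > (0 : ℝ), ∀ V : Set ℂ, V ⊆ ball z₀ r → IsOpen V →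
    ∀ f : ℂ → E, AnalyticOnNhd ℂ f V → (∀ z ∈ V, (T - z • 1) (f z) = 0) →
      ∀ z ∈ V, f z = 0

/-- `S(T)`: the set of points where `T` fails to have the SVEP. -/
def svepFail (T : E →L[ℂ] E) : Set ℂ :=
  {z | ¬ HasSVEPAt T z}

open Topology Filter

section Descent

theorem hasFiniteDescent_iff (T : E →L[ℂ] E) :
    HasFiniteDescent T ↔ ∃ d : ℕ, ∀ x, ∃ y, (T ^ (d + 1)) y = (T ^ d) x := by
  constructor
  · rintro ⟨d, hd⟩
    exact ⟨d, fun x => hd.le ⟨x, rfl⟩⟩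
  · rintro ⟨d, hd⟩
    refine ⟨d, le_antisymm ?_ ?_⟩
    · rintro _ ⟨x, rfl⟩
      exact hd x
    · rintro _ ⟨y, rfl⟩
      exact ⟨T y, by simp [pow_succ]⟩

variable {T : E →L[ℂ] E} {d : ℕ}

theorem exists_pow_add_apply_eq (hd : ∀ x, ∃ y, (T ^ (d + 1)) y = (T ^ d) x) (j : ℕ) (x : E) :
    ∃ y, (T ^ (d + j)) y = (T ^ d) x := by
  induction j with
  | zero => exact ⟨x, rfl⟩
  | succ j ih =>
    obtain ⟨y, hy⟩ := ih
    obtain ⟨y', hy'⟩ := hd y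
    refine ⟨y', ?_⟩
    rw [show d + (j + 1) = j + (d + 1) by omega, pow_add, mul_apply_eq_comp, hy',
      ← mul_apply_eq_comp, ← pow_add, add_comm j d, hy]

theorem exists_bounded_preimage_pow [CompleteSpace E]
    (hd : ∀ x, ∃ y, (T ^ (d + 1)) y = (T ^ d) x) :
    ∃ c > 0, ∀ x, ∃ y, (T ^ (d + 1)) y = (T ^ d) x ∧ ‖y‖ ≤ c * ‖x‖ := by
  -- `ran T^d` need not be closed, so the open mapping theorem is applied to the first
  -- projection of the closed subspace `{(x, y) | T^d x = T^(d+1) y}`.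
  let f : E × E →L[ℂ] E := (T ^ d).comp (fst ℂ E E) - (T ^ (d + 1)).comp (snd ℂ E E)
  let G := LinearMap.ker (f : E × E →ₗ[ℂ] E)
  let π : G →L[ℂ] E := (fst ℂ E E).comp G.subtypeL
  have hπ : Function.Surjective π := by
    intro x
    obtain ⟨y, hy⟩ := hd x
    refine ⟨⟨(x, y), ?_⟩, rfl⟩
    show (T ^ d) x - (T ^ (d + 1)) y = 0
    rw [hy, sub_self]
  obtain ⟨c, hc, hpre⟩ := exists_preimage_norm_le π hπ
  refine ⟨c, hc, fun x => ?_⟩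
  obtain ⟨⟨⟨x', y⟩, hxy⟩, hx, hnorm⟩ := hpre x
  have hx' : x' = x := hx
  subst hx'
  have hker : (T ^ d) x' - (T ^ (d + 1)) y = 0 := hxy
  exact ⟨y, (sub_eq_zero.mp hker).symm, (norm_snd_le (x', y)).trans hnorm⟩

theorem exists_backward_orbit [CompleteSpace E] (hd : ∀ x, ∃ y, (T ^ (d + 1)) y = (T ^ d) x)
    (x : E) : ∃ (u : ℕ → E) (K c : ℝ), 0 < c ∧ u 0 = (T ^ d) x ∧ (∀ n, T (u (n + 1)) = u n) ∧
      ∀ n, ‖u n‖ ≤ K * c ^ n := by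
  obtain ⟨c, hc, hpre⟩ := exists_bounded_preimage_pow hd
  choose g hg using hpre
  have hg_norm : ∀ n, ‖g^[n] x‖ ≤ c ^ n * ‖x‖ := by
    intro n
    induction n with
    | zero => simp
    | succ n ih =>
      rw [Function.iterate_succ_apply', pow_succ', mul_assoc]
      exact (hg _).2.trans (mul_le_mul_of_nonneg_left ih hc.le)
  refine ⟨fun n => (T ^ d) (g^[n] x), ‖T ^ d‖ * ‖x‖, c, hc, rfl, fun n => ?_, fun n => ?_⟩
  · dsimp only
    rw [Function.iterate_succ_apply', ← mul_apply_eq_comp, ← pow_succ', (hg _).1]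
  · calc ‖(T ^ d) (g^[n] x)‖ ≤ ‖T ^ d‖ * (c ^ n * ‖x‖) :=
          (le_opNorm _ _).trans (mul_le_mul_of_nonneg_left (hg_norm n) (norm_nonneg _))
      _ = ‖T ^ d‖ * ‖x‖ * c ^ n := by ring

end Descent

theorem HasSVEPAt.backward_orbit_eq_zero [CompleteSpace E] {T : E →L[ℂ] E} {z₀ : ℂ}
    (hT : HasSVEPAt T z₀) {v : ℕ → E} {K c : ℝ} (hc : 0 < c) (h0 : v 0 = 0)
    (hv : ∀ n, (T - z₀ • 1) (v (n + 1)) = v n) (hb : ∀ n, ‖v n‖ ≤ K * c ^ n) (n : ℕ) :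
    v n = 0 := by
  let p : FormalMultilinearSeries ℂ ℂ E :=
    fun n => ContinuousMultilinearMap.mkPiRing ℂ (Fin n) (v (n + 1))
  have hp_apply : ∀ n (ζ : ℂ), p n (fun _ => ζ) = ζ ^ n • v (n + 1) := by
    intro n ζ
    simp [p, ContinuousMultilinearMap.mkPiRing_apply]
  have hp_radius : 0 < p.radius := by
    refine lt_of_lt_of_le ?_
      (p.le_radius_of_bound (K * c) (r := ⟨c⁻¹, by positivity⟩) fun n => ?_)
    · exact ENNReal.coe_pos.mpr (NNReal.coe_pos.mp (inv_pos.mpr hc))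
    · calc ‖p n‖ * c⁻¹ ^ n = ‖v (n + 1)‖ * c⁻¹ ^ n := by
            rw [ContinuousMultilinearMap.norm_mkPiRing]
        _ ≤ K * c ^ (n + 1) * c⁻¹ ^ n := by gcongr; exact hb _
        _ = K * c := by rw [pow_succ, inv_pow]; field_simp
  obtain ⟨r, hr, hsvep⟩ := hT
  let f : ℂ → E := fun μ => p.sum (μ - z₀)
  have hf : HasFPowerSeriesOnBall f p z₀ p.radius := by
    simpa [f] using (p.hasFPowerSeriesOnBall hp_radius).comp_sub z₀
  let V := eball z₀ p.radius ∩ ball z₀ r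
  have hV : V ∈ 𝓝 z₀ :=
    inter_mem (eball_mem_nhds _ hp_radius) (ball_mem_nhds _ hr)
  have hf_eigen : ∀ μ ∈ V, (T - μ • 1) (f μ) = 0 := by
    intro μ hμ
    have hζ : μ - z₀ ∈ eball (0 : ℂ) p.radius := by
      simpa [edist_eq_enorm_sub] using hμ.1
    have hsum : HasSum (fun n => (μ - z₀) ^ n • v (n + 1)) (f μ) := by
      simpa only [hp_apply] using p.hasSum hζ
    have h1 : HasSum (fun n => (μ - z₀) ^ n • v n) ((T - z₀ • 1) (f μ)) := by
      simpa only [map_smul, hv] using (T - z₀ • 1).hasSum hsum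
    have h2 : HasSum (fun n => (μ - z₀) ^ n • v n) ((μ - z₀) • f μ) := by
      refine (hasSum_nat_add_iff' 1).mp ?_
      simpa [h0, pow_succ', mul_smul] using hsum.const_smul (μ - z₀)
    calc (T - μ • 1) (f μ) = (T - z₀ • 1) (f μ) - (μ - z₀) • f μ := by
          simp only [sub_apply, smul_apply, one_apply_eq_self, sub_smul]; abel
      _ = 0 := by rw [h1.unique h2, sub_self]
  have hf_zero : f =ᶠ[𝓝 z₀] 0 := by
    filter_upwards [hV] with μ hμ
    exact hsvep V inter_subset_right (isOpen_eball.inter isOpen_ball) f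
      (fun μ hμ => hf.analyticAt_of_mem hμ.1) hf_eigen μ hμ
  have hp_zero : p = 0 := hf.hasFPowerSeriesAt.eq_zero_of_eventually hf_zero
  cases n with
  | zero => exact h0
  | succ n =>
    rw [← norm_eq_zero, ← ContinuousMultilinearMap.norm_mkPiRing (𝕜 := ℂ) (ι := Fin n)]
    exact norm_eq_zero.mpr (congrFun hp_zero n)

section UpperTriangular

variable {U W : Type*} [NormedAddCommGroup U] [NormedSpace ℂ U] [NormedAddCommGroup W]
  [NormedSpace ℂ W] (A : U →L[ℂ] U) (B : W →L[ℂ] W) (C : W →L[ℂ] U)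

theorem ucMat_sub_smul (z : ℂ) : ucMat A B C - z • 1 = ucMat (A - z • 1) (B - z • 1) C := by
  ext v <;> simp [ucMat, sub_add_eq_add_sub]

theorem ucMat_pow_apply_snd (n : ℕ) (v : U × W) : ((ucMat A B C ^ n) v).2 = (B ^ n) v.2 := by
  induction n with
  | zero => rfl
  | succ n ih => rw [pow_succ', pow_succ', mul_apply_eq_comp, mul_apply_eq_comp, ← ih]; rfl

theorem ucMat_pow_apply_inl (n : ℕ) (x : U) : (ucMat A B C ^ n) (x, 0) = ((A ^ n) x, 0) := by
  induction n with
  | zero => rfl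
  | succ n ih => rw [pow_succ', pow_succ', mul_apply_eq_comp, mul_apply_eq_comp, ih]; simp [ucMat]

variable {A B C}

theorem hasFiniteDescent_right_of_ucMat (h : HasFiniteDescent (ucMat A B C)) :
    HasFiniteDescent B := by
  obtain ⟨d, hd⟩ := (hasFiniteDescent_iff _).mp h
  refine (hasFiniteDescent_iff B).mpr ⟨d, fun y => ?_⟩
  obtain ⟨w, hw⟩ := hd (0, y)
  exact ⟨w.2, by simpa only [ucMat_pow_apply_snd] using congrArg Prod.snd hw⟩

/-- Write `y = B y₁ + y₀` with `B^q y₀ = 0`: then `M^q ((x, y) - M (0, y₁))` lies in `X × 0`,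
where the descent of `A` applies. -/
theorem hasFiniteDescent_ucMat (hA : HasFiniteDescent A) (hB : HasFiniteDescent B) :
    HasFiniteDescent (ucMat A B C) := by
  obtain ⟨p, hp⟩ := (hasFiniteDescent_iff A).mp hA
  obtain ⟨q, hq⟩ := (hasFiniteDescent_iff B).mp hB
  set M := ucMat A B C
  refine (hasFiniteDescent_iff M).mpr ⟨p + q, fun v => ?_⟩
  obtain ⟨y₁, hy₁⟩ := hq v.2
  set v₀ := v - M (0, y₁)
  have hv₀ : (M ^ q) v₀ = (((M ^ q) v₀).1, 0) := by
    refine Prod.ext rfl ?_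
    rw [ucMat_pow_apply_snd]
    show (B ^ q) (v.2 - B y₁) = 0
    rw [map_sub, ← mul_apply_eq_comp, ← pow_succ, hy₁, sub_self]
  obtain ⟨x₁, hx₁⟩ := exists_pow_add_apply_eq hp (q + 1) ((M ^ q) v₀).1
  rw [← add_assoc] at hx₁
  refine ⟨(x₁, 0) + (0, y₁), ?_⟩
  calc (M ^ (p + q + 1)) ((x₁, 0) + (0, y₁))
      = ((A ^ (p + q + 1)) x₁, 0) + (M ^ (p + q)) (M (0, y₁)) := by
        rw [map_add, ucMat_pow_apply_inl, pow_succ M, mul_apply_eq_comp]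
    _ = (M ^ p) ((M ^ q) v₀) + (M ^ (p + q)) (M (0, y₁)) := by
        rw [hx₁, hv₀, ucMat_pow_apply_inl]
    _ = (M ^ (p + q)) v := by
        rw [← mul_apply_eq_comp, ← pow_add, ← map_add, sub_add_cancel]

theorem hasFiniteDescent_left_of_ucMat [CompleteSpace U] [CompleteSpace W] {z : ℂ}
    (hBz : HasSVEPAt B z) (h : HasFiniteDescent (ucMat A (B - z • 1) C)) :
    HasFiniteDescent A := by
  obtain ⟨d, hd⟩ := (hasFiniteDescent_iff _).mp h
  refine (hasFiniteDescent_iff A).mpr ⟨d, fun x => ?_⟩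
  obtain ⟨u, K, c, hc, hu0, hu, hub⟩ := exists_backward_orbit hd (x, 0)
  have hsnd : ∀ n, (u n).2 = 0 :=
    hBz.backward_orbit_eq_zero hc (by rw [hu0, ucMat_pow_apply_inl])
      (fun n => congrArg Prod.snd (hu n)) (fun n => (norm_snd_le (u n)).trans (hub n))
  have hfst : ∀ n, (A ^ n) (u n).1 = (u 0).1 := by
    intro n
    induction n with
    | zero => rfl
    | succ n ih =>
      have h : A (u (n + 1)).1 + C (u (n + 1)).2 = (u n).1 := congrArg Prod.fst (hu n)
      rw [hsnd, map_zero, add_zero] at h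
      rw [pow_succ, mul_apply_eq_comp, h, ih]
  exact ⟨(u (d + 1)).1, by rw [hfst, hu0, ucMat_pow_apply_inl]⟩

end UpperTriangular

theorem stmt8 (A : X →L[ℂ] X) (B : Y →L[ℂ] Y) (C : Y →L[ℂ] X) :
    descentSpectrum (ucMat A B C) ∪ svepFail B =
      descentSpectrum A ∪ descentSpectrum B ∪ svepFail B := by
  ext z
  by_cases hz : HasSVEPAt B z
  · have key : HasFiniteDescent (ucMat A B C - z • 1) ↔
        HasFiniteDescent (A - z • 1) ∧ HasFiniteDescent (B - z • 1) := by
      rw [ucMat_sub_smul]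
      exact ⟨fun h => ⟨hasFiniteDescent_left_of_ucMat hz h, hasFiniteDescent_right_of_ucMat h⟩,
        fun h => hasFiniteDescent_ucMat h.1 h.2⟩
    simp only [mem_union, descentSpectrum, svepFail, mem_ofPred_eq, key, hz]
    tauto
  · simp [svepFail, hz]
end
end
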